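/- arXiv:2108.03197 — 2 statements merged into one kernel-verified Lean document; each statement's English description precedes it below -/
import Mathlib

section
/- Fiberwise form of Prop. 5.2 (smooth extension of the components of a proper solution): Let n ≥ 2, let C ⊆ ℝ^n ∖ {0} be open and conic with closure C̄ in ℝ^n ∖ {0}, and let U be an open conic neighborhood of C̄ in ℝ^n ∖ {0}. Let J = (J_i^k) : U → ℝ^{n×n} be smooth and positively 1-homogeneous, and assume that on C one has J_i^k = Z^k_{·i} + A_i y^k for some smooth positively 2-homogeneous Z : C → ℝ^n and some smooth positively 0-homogeneous A = (A_1,…,A_n) : C → ℝ^n. Then Z and A extend smoothly to C̄: there exist a smooth positively 2-homogeneous map Ẑ and a smooth positively 0-homogeneous map Â, both defined on an open conic neighborhood of C̄ in ℝ^n ∖ {0}, with Ẑ = Z and Â = A on C. -/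
open scoped BigOperators

noncomputable section

/-- Partial derivative `∂f/∂y^i`. -/
def pd {n : ℕ} (f : (Fin n → ℝ) → ℝ) (i : Fin n) : (Fin n → ℝ) → ℝ :=
  fun y => fderiv ℝ f y (Pi.single i 1)

/-- `C` is a conic set: stable under positive scalings. -/
def Conic {n : ℕ} (C : Set (Fin n → ℝ)) : Prop :=
  ∀ ⦃y⦄, y ∈ C → ∀ ⦃t : ℝ⦄, 0 < t → t • y ∈ C

/-- `f` is positively `α`-homogeneous on `C`. -/
def PosHom {n : ℕ} (α : ℝ) (C : Set (Fin n → ℝ)) (f : (Fin n → ℝ) → ℝ) : Prop :=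
  ∀ y ∈ C, ∀ t : ℝ, 0 < t → f (t • y) = t ^ α * f y

/-- Vector-valued positively `α`-homogeneous map on `C`. -/
def PosHomMap {n : ℕ} (α : ℝ) (C : Set (Fin n → ℝ)) (Z : (Fin n → ℝ) → Fin n → ℝ) : Prop :=
  ∀ y ∈ C, ∀ t : ℝ, 0 < t → Z (t • y) = t ^ α • Z y

/-- Closure of `C` inside `ℝ^n ∖ {0}`. -/
def clos {n : ℕ} (C : Set (Fin n → ℝ)) : Set (Fin n → ℝ) := closure C \ {0}

/-!
By Euler's identity for the 2-homogeneous `Z`, contracting `J_i^k = Z^k_{·i} + A_i y^k` with `y^i`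
gives `W^k := y^i J_i^k = 2 Z^k + (y·A) y^k` on `C`. As `y·A` is 1-homogeneous, Euler again gives
`W^k_{·k} = 2 Z^k_{·k} + (n + 1) (y·A)`, while `J_k^k = Z^k_{·k} + y·A`. Hence on `C`
`y·A = (W^k_{·k} - 2 J_k^k) / (n - 1)`, `Z = (W - (y·A) y) / 2` and
`A_i = (J_i^k - Z^k_{·i}) y^k / |y|^2`. The right-hand sides involve only `J`, so they define smooth
homogeneous maps of the right degrees on all of `U ⊇ C̄`.
-/

variable {n : ℕ} {C : Set (Fin n → ℝ)} {f g : (Fin n → ℝ) → ℝ} {y : Fin n → ℝ} {α β : ℝ}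

theorem contDiffOn_pd (hC : IsOpen C) (hf : ContDiffOn ℝ (⊤ : ℕ∞) f C) (i : Fin n) :
    ContDiffOn ℝ (⊤ : ℕ∞) (pd f i) C :=
  (hf.fderiv_of_isOpen hC (m := (⊤ : ℕ∞)) (by simp)).clm_apply contDiffOn_const

theorem Filter.EventuallyEq.pd_eq (h : f =ᶠ[nhds y] g) (i : Fin n) : pd f i y = pd g i y := by
  simp only [pd, h.fderiv_eq]

theorem pd_add (hf : DifferentiableAt ℝ f y) (hg : DifferentiableAt ℝ g y) (i : Fin n) :
    pd (fun z => f z + g z) i y = pd f i y + pd g i y := by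
  simp [pd, fderiv_fun_add hf hg]

theorem pd_mul (hf : DifferentiableAt ℝ f y) (hg : DifferentiableAt ℝ g y) (i : Fin n) :
    pd (fun z => f z * g z) i y = f y * pd g i y + pd f i y * g y := by
  simp [pd, fderiv_fun_mul hf hg, mul_comm (g y)]

theorem pd_const_mul (c : ℝ) (i : Fin n) : pd (fun z => c * f z) i y = c * pd f i y := by
  simp only [pd]
  rw [show (fun z => c * f z) = c • f from rfl, fderiv_const_smul_field]
  rfl

theorem pd_coord (i k : Fin n) :
    pd (fun z : Fin n → ℝ => z k) i y = (Pi.single i 1 : Fin n → ℝ) k :=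
  congrArg (· (Pi.single i 1)) (ContinuousLinearMap.proj (R := ℝ) (φ := fun _ => ℝ) k).fderiv

theorem sum_mul_pd_eq_fderiv (f : (Fin n → ℝ) → ℝ) (y : Fin n → ℝ) :
    ∑ i, y i * pd f i y = fderiv ℝ f y y := by
  classical
  have h := congrArg (fderiv ℝ f y) (pi_eq_sum_univ' y)
  simp only [map_sum, map_smul, smul_eq_mul] at h
  exact h.symm

theorem posHom_coord (C : Set (Fin n → ℝ)) (k : Fin n) : PosHom 1 C (fun z => z k) := by
  intro y _ t _
  simp

theorem PosHom.sub (hf : PosHom α C f) (hg : PosHom α C g) : PosHom α C (fun z => f z - g z) := by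
  intro y hy t ht
  simp only [hf y hy t ht, hg y hy t ht, mul_sub]

theorem PosHom.const_mul (hf : PosHom α C f) (c : ℝ) : PosHom α C (fun z => c * f z) := by
  intro y hy t ht
  simp only [hf y hy t ht, mul_left_comm]

theorem PosHom.sum {ι : Type*} (s : Finset ι) {F : ι → (Fin n → ℝ) → ℝ}
    (hF : ∀ j ∈ s, PosHom α C (F j)) : PosHom α C (fun z => ∑ j ∈ s, F j z) := by
  intro y hy t ht
  simp only [Finset.mul_sum]
  exact Finset.sum_congr rfl fun j hj => hF j hj y hy t ht

theorem PosHom.mul (hf : PosHom α C f) (hg : PosHom β C g) :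
    PosHom (α + β) C (fun z => f z * g z) := by
  intro y hy t ht
  simp only [hf y hy t ht, hg y hy t ht, Real.rpow_add ht]
  ring

theorem PosHom.div (hf : PosHom α C f) (hg : PosHom β C g) :
    PosHom (α - β) C (fun z => f z / g z) := by
  intro y hy t ht
  simp only [hf y hy t ht, hg y hy t ht, Real.rpow_sub ht, mul_div_mul_comm]

theorem PosHom.div_const (hf : PosHom α C f) (c : ℝ) : PosHom α C (fun z => f z / c) := by
  intro y hy t ht
  simp only [hf y hy t ht, mul_div_assoc]

theorem PosHom.posHom_pd (hC : IsOpen C) (hf : PosHom α C f) (i : Fin n) :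
    PosHom (α - 1) C (pd f i) := by
  intro y hy t ht
  have hscaled : (fun z => f (t • z)) =ᶠ[nhds y] (fun z => t ^ α * f z) :=
    Filter.eventually_of_mem (hC.mem_nhds hy) fun z hz => hf z hz t ht
  have h := congrArg (fun L : (Fin n → ℝ) →L[ℝ] ℝ => L (Pi.single i 1)) hscaled.fderiv_eq
  rw [fderiv_comp_smul, show (fun z => t ^ α * f z) = t ^ α • f from rfl,
    fderiv_const_smul_field] at h
  change t * pd f i (t • y) = t ^ α * pd f i y at h
  rw [Real.rpow_sub_one ht.ne', div_mul_eq_mul_div, eq_div_iff ht.ne', ← h, mul_comm]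

theorem PosHom.sum_mul_pd (hf : PosHom α C f) (hy : y ∈ C) (hd : DifferentiableAt ℝ f y) :
    ∑ i, y i * pd f i y = α * f y := by
  have hray : HasDerivAt (fun t : ℝ => f (t • y)) (fderiv ℝ f y y) 1 := by
    have hline : HasDerivAt (fun t : ℝ => t • y) y 1 := by
      simpa using hasDerivAt_id' (x := (1 : ℝ)) |>.smul_const y
    exact hd.hasFDerivAt.comp_hasDerivAt_of_eq (1 : ℝ) hline (one_smul ℝ y).symm
  have hpow : HasDerivAt (fun t : ℝ => t ^ α * f y) (α * f y) 1 := by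
    simpa using (Real.hasDerivAt_rpow_const (x := 1) (p := α) (Or.inl one_ne_zero)).mul_const (f y)
  have hscaled : (fun t : ℝ => f (t • y)) =ᶠ[nhds 1] (fun t => t ^ α * f y) :=
    Filter.eventually_of_mem (Ioi_mem_nhds one_pos) fun t ht => hf y hy t ht
  rw [sum_mul_pd_eq_fderiv, ← hray.unique (hpow.congr_of_eventuallyEq hscaled)]

theorem sum_mul_self_ne_zero (hy : y ≠ 0) : ∑ k, y k * y k ≠ 0 :=
  dotProduct_self_eq_zero.not.mpr hy

theorem posHomMap_iff {Z : (Fin n → ℝ) → Fin n → ℝ} :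
    PosHomMap α C Z ↔ ∀ k, PosHom α C (fun z => Z z k) := by
  simp only [PosHomMap, PosHom, funext_iff, Pi.smul_apply, smul_eq_mul]
  grind

variable {U : Set (Fin n → ℝ)} {J : (Fin n → ℝ) → Fin n → Fin n → ℝ}

def leftContract (J : (Fin n → ℝ) → Fin n → Fin n → ℝ) (y : Fin n → ℝ) (k : Fin n) : ℝ :=
  ∑ i, y i * J y i k

def recoverDot (J : (Fin n → ℝ) → Fin n → Fin n → ℝ) (y : Fin n → ℝ) : ℝ :=
  (∑ k, pd (fun z => leftContract J z k) k y - 2 * ∑ k, J y k k) / ((n : ℝ) - 1)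

def recoverZ (J : (Fin n → ℝ) → Fin n → Fin n → ℝ) (y : Fin n → ℝ) (k : Fin n) : ℝ :=
  (leftContract J y k - recoverDot J y * y k) / 2

def recoverA (J : (Fin n → ℝ) → Fin n → Fin n → ℝ) (y : Fin n → ℝ) (i : Fin n) : ℝ :=
  (∑ k, (J y i k - pd (fun z => recoverZ J z k) i y) * y k) / ∑ k, y k * y k

theorem contDiffOn_recoverDot (hU : IsOpen U) (hJ : ContDiffOn ℝ (⊤ : ℕ∞) J U) :
    ContDiffOn ℝ (⊤ : ℕ∞) (recoverDot J) U := by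
  have hW : ∀ k, ContDiffOn ℝ (⊤ : ℕ∞) (pd (fun z => leftContract J z k) k) U := fun k =>
    contDiffOn_pd hU (by unfold leftContract; fun_prop) k
  unfold recoverDot
  fun_prop

theorem contDiffOn_recoverZ_apply (hU : IsOpen U) (hJ : ContDiffOn ℝ (⊤ : ℕ∞) J U) (k : Fin n) :
    ContDiffOn ℝ (⊤ : ℕ∞) (fun z => recoverZ J z k) U := by
  have := contDiffOn_recoverDot hU hJ
  unfold recoverZ leftContract
  fun_prop

theorem contDiffOn_recoverA (hU : IsOpen U) (hJ : ContDiffOn ℝ (⊤ : ℕ∞) J U)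
    (hU₀ : ∀ y ∈ U, y ≠ 0) : ContDiffOn ℝ (⊤ : ℕ∞) (recoverA J) U := by
  refine contDiffOn_pi.mpr fun i => ?_
  have hZ' : ∀ k, ContDiffOn ℝ (⊤ : ℕ∞) (pd (fun z => recoverZ J z k) i) U := fun k =>
    contDiffOn_pd hU (contDiffOn_recoverZ_apply hU hJ k) i
  unfold recoverA
  refine ContDiffOn.div (by fun_prop) (by fun_prop) fun y hy => ?_
  exact sum_mul_self_ne_zero (hU₀ y hy)

theorem posHom_entry (hJ : ∀ y ∈ U, ∀ t : ℝ, 0 < t → J (t • y) = t • J y) (i k : Fin n) :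
    PosHom 1 U (fun z => J z i k) := by
  intro y hy t ht
  simp [hJ y hy t ht]

theorem posHom_leftContract_apply (hJ : ∀ y ∈ U, ∀ t : ℝ, 0 < t → J (t • y) = t • J y)
    (k : Fin n) : PosHom 2 U (fun z => leftContract J z k) := by
  have := PosHom.sum Finset.univ fun i _ => (posHom_coord U i).mul (posHom_entry hJ i k)
  rwa [one_add_one_eq_two] at this

theorem posHom_recoverDot (hU : IsOpen U) (hJ : ∀ y ∈ U, ∀ t : ℝ, 0 < t → J (t • y) = t • J y) :
    PosHom 1 U (recoverDot J) := by
  have hdiv : PosHom (2 - 1) U fun z => ∑ k, pd (fun z => leftContract J z k) k z :=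
    PosHom.sum _ fun k _ => (posHom_leftContract_apply hJ k).posHom_pd hU k
  rw [show (2 : ℝ) - 1 = 1 by norm_num] at hdiv
  exact (hdiv.sub ((PosHom.sum _ fun k _ => posHom_entry hJ k k).const_mul 2)).div_const _

theorem posHom_recoverZ_apply (hU : IsOpen U) (hJ : ∀ y ∈ U, ∀ t : ℝ, 0 < t → J (t • y) = t • J y)
    (k : Fin n) : PosHom 2 U (fun z => recoverZ J z k) := by
  have h := (posHom_recoverDot hU hJ).mul (posHom_coord U k)
  rw [one_add_one_eq_two] at h
  exact ((posHom_leftContract_apply hJ k).sub h).div_const 2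

theorem posHomMap_recoverA (hU : IsOpen U) (hJ : ∀ y ∈ U, ∀ t : ℝ, 0 < t → J (t • y) = t • J y) :
    PosHomMap 0 U (recoverA J) := by
  refine posHomMap_iff.mpr fun i => ?_
  have hpdZ : ∀ k, PosHom (2 - 1) U (pd (fun z => recoverZ J z k) i) := fun k =>
    (posHom_recoverZ_apply hU hJ k).posHom_pd hU i
  rw [show (2 : ℝ) - 1 = 1 by norm_num] at hpdZ
  have hnum := PosHom.sum Finset.univ fun k _ =>
    ((posHom_entry hJ i k).sub (hpdZ k)).mul (posHom_coord U k)
  have hden := PosHom.sum Finset.univ fun k _ => (posHom_coord U k).mul (posHom_coord U k)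
  have h := hnum.div hden
  rwa [sub_self] at h

variable {Z A : (Fin n → ℝ) → Fin n → ℝ}

theorem leftContract_eq (hC : IsOpen C) (hZ : DifferentiableOn ℝ Z C) (hZhom : PosHomMap 2 C Z)
    (hdec : ∀ y ∈ C, ∀ i k, J y i k = pd (fun z => Z z k) i y + A y i * y k)
    (hy : y ∈ C) (k : Fin n) :
    leftContract J y k = 2 * Z y k + (∑ i, y i * A y i) * y k := by
  have heuler := (posHomMap_iff.mp hZhom k).sum_mul_pd hy
    (differentiableAt_pi.mp (hZ.differentiableAt (hC.mem_nhds hy)) k)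
  simp only [leftContract, hdec y hy, mul_add, Finset.sum_add_distrib, heuler, Finset.sum_mul,
    mul_assoc]

theorem recoverDot_eq (hn : n ≠ 1) (hC : IsOpen C) (hZ : DifferentiableOn ℝ Z C)
    (hZhom : PosHomMap 2 C Z) (hA : DifferentiableOn ℝ A C) (hAhom : PosHomMap 0 C A)
    (hdec : ∀ y ∈ C, ∀ i k, J y i k = pd (fun z => Z z k) i y + A y i * y k) (hy : y ∈ C) :
    recoverDot J y = ∑ i, y i * A y i := by
  set s : (Fin n → ℝ) → ℝ := fun z => ∑ i, z i * A z i
  have hZy : ∀ k, DifferentiableAt ℝ (fun z => Z z k) y :=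
    differentiableAt_pi.mp (hZ.differentiableAt (hC.mem_nhds hy))
  have hsy : DifferentiableAt ℝ s y := by
    have := differentiableAt_pi.mp (hA.differentiableAt (hC.mem_nhds hy))
    fun_prop
  have hs : PosHom 1 C s := by
    have := PosHom.sum Finset.univ fun i _ => (posHom_coord C i).mul (posHomMap_iff.mp hAhom i)
    rwa [add_zero] at this
  have hdiv : ∀ k, pd (fun z => leftContract J z k) k y
      = 2 * pd (fun z => Z z k) k y + (s y + pd s k y * y k) := by
    intro k
    have hW : (fun z => leftContract J z k) =ᶠ[nhds y] fun z => 2 * Z z k + s z * z k :=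
      Filter.eventually_of_mem (hC.mem_nhds hy) fun z hz => leftContract_eq hC hZ hZhom hdec hz k
    rw [hW.pd_eq, pd_add (by fun_prop) (by fun_prop), pd_const_mul, pd_mul hsy (by fun_prop),
      pd_coord, Pi.single_eq_same, mul_one]
  have htrace : ∑ k, J y k k = ∑ k, pd (fun z => Z z k) k y + s y := by
    simp only [hdec y hy, Finset.sum_add_distrib, s, mul_comm]
  have heuler : ∑ k, pd s k y * y k = s y := by
    simpa [mul_comm] using hs.sum_mul_pd hy hsy
  have hn' : (n : ℝ) - 1 ≠ 0 := sub_ne_zero.mpr (by exact_mod_cast hn)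
  rw [recoverDot, div_eq_iff hn']
  simp only [hdiv, htrace, Finset.sum_add_distrib, ← Finset.mul_sum, Finset.sum_const,
    Finset.card_univ, Fintype.card_fin, nsmul_eq_mul]
  change _ = s y * _
  rw [heuler]
  ring

theorem recoverZ_eq (hn : n ≠ 1) (hC : IsOpen C) (hZ : DifferentiableOn ℝ Z C)
    (hZhom : PosHomMap 2 C Z) (hA : DifferentiableOn ℝ A C) (hAhom : PosHomMap 0 C A)
    (hdec : ∀ y ∈ C, ∀ i k, J y i k = pd (fun z => Z z k) i y + A y i * y k) (hy : y ∈ C) :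
    recoverZ J y = Z y := by
  funext k
  rw [recoverZ, leftContract_eq hC hZ hZhom hdec hy, recoverDot_eq hn hC hZ hZhom hA hAhom hdec hy]
  ring

theorem recoverA_eq (hn : n ≠ 1) (hC : IsOpen C) (hZ : DifferentiableOn ℝ Z C)
    (hZhom : PosHomMap 2 C Z) (hA : DifferentiableOn ℝ A C) (hAhom : PosHomMap 0 C A)
    (hdec : ∀ y ∈ C, ∀ i k, J y i k = pd (fun z => Z z k) i y + A y i * y k) (hy : y ∈ C)
    (hy₀ : y ≠ 0) : recoverA J y = A y := by
  funext i
  have hpdZ : ∀ k, pd (fun z => recoverZ J z k) i y = pd (fun z => Z z k) i y := fun k =>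
    Filter.EventuallyEq.pd_eq (Filter.eventually_of_mem (hC.mem_nhds hy) fun z hz =>
      congrFun (recoverZ_eq hn hC hZ hZhom hA hAhom hdec hz) k) i
  have hnum : ∑ k, (J y i k - pd (fun z => recoverZ J z k) i y) * y k = A y i * ∑ k, y k * y k := by
    simp only [hpdZ, hdec y hy, add_sub_cancel_left, Finset.mul_sum, mul_assoc]
  rw [recoverA, hnum]
  exact mul_div_cancel_right₀ _ (sum_mul_self_ne_zero hy₀)

theorem proper_solution_components_extend_general
    {n : ℕ} (hn : 2 ≤ n) (C : Set (Fin n → ℝ)) (hCopen : IsOpen C)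
    (hCnz : ∀ y ∈ C, y ≠ 0)
    (U : Set (Fin n → ℝ)) (hUopen : IsOpen U) (hUconic : Conic U)
    (hUnz : ∀ y ∈ U, y ≠ 0) (hCU : clos C ⊆ U)
    (J : (Fin n → ℝ) → Fin n → Fin n → ℝ)
    (hJsmooth : ContDiffOn ℝ (⊤ : ℕ∞) J U)
    (hJhom : ∀ y ∈ U, ∀ t : ℝ, 0 < t → J (t • y) = t • J y)
    (Z A : (Fin n → ℝ) → Fin n → ℝ)
    (hZsmooth : ContDiffOn ℝ (⊤ : ℕ∞) Z C) (hZhom : PosHomMap 2 C Z)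
    (hAsmooth : ContDiffOn ℝ (⊤ : ℕ∞) A C) (hAhom : PosHomMap 0 C A)
    (hdec : ∀ y ∈ C, ∀ i k, J y i k = pd (fun z => Z z k) i y + A y i * y k) :
    ∃ (V : Set (Fin n → ℝ)) (Zh Ah : (Fin n → ℝ) → Fin n → ℝ),
      IsOpen V ∧ Conic V ∧ (∀ y ∈ V, y ≠ 0) ∧ clos C ⊆ V ∧
      ContDiffOn ℝ (⊤ : ℕ∞) Zh V ∧ PosHomMap 2 V Zh ∧
      ContDiffOn ℝ (⊤ : ℕ∞) Ah V ∧ PosHomMap 0 V Ah ∧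
      (∀ y ∈ C, Zh y = Z y ∧ Ah y = A y) := by
  have hn₁ : n ≠ 1 := by omega
  have hZ := hZsmooth.differentiableOn (by simp)
  have hA := hAsmooth.differentiableOn (by simp)
  refine ⟨U, recoverZ J, recoverA J, hUopen, hUconic, hUnz, hCU,
    contDiffOn_pi.mpr (contDiffOn_recoverZ_apply hUopen hJsmooth),
    posHomMap_iff.mpr (posHom_recoverZ_apply hUopen hJhom),
    contDiffOn_recoverA hUopen hJsmooth hUnz, posHomMap_recoverA hUopen hJhom,
    fun y hy => ⟨recoverZ_eq hn₁ hCopen hZ hZhom hA hAhom hdec hy,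
      recoverA_eq hn₁ hCopen hZ hZhom hA hAhom hdec hy (hCnz y hy)⟩⟩

/-- **Fiberwise form of Prop. 5.2** (smooth extension of the components of a proper
solution). If `J`, smooth and 1-homogeneous on an open conic neighborhood `U` of the
closure of `C` in `ℝ^n ∖ {0}`, decomposes on `C` as `J_i^k = Z^k_{·i} + A_i y^k` with `Z`
smooth 2-homogeneous and `A` smooth 0-homogeneous on `C`, then `Z` and `A` extend smoothly
(and homogeneously) to an open conic neighborhood of the closure of `C` in `ℝ^n ∖ {0}`. -/
theorem proper_solution_components_extend
    {n : ℕ} (hn : 2 ≤ n) (C : Set (Fin n → ℝ)) (hCopen : IsOpen C)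
    (hCnz : ∀ y ∈ C, y ≠ 0) (hCconic : Conic C)
    (U : Set (Fin n → ℝ)) (hUopen : IsOpen U) (hUconic : Conic U)
    (hUnz : ∀ y ∈ U, y ≠ 0) (hCU : clos C ⊆ U)
    (J : (Fin n → ℝ) → Fin n → Fin n → ℝ)
    (hJsmooth : ContDiffOn ℝ (⊤ : ℕ∞) J U)
    (hJhom : ∀ y ∈ U, ∀ t : ℝ, 0 < t → J (t • y) = t • J y)
    (Z A : (Fin n → ℝ) → Fin n → ℝ)
    (hZsmooth : ContDiffOn ℝ (⊤ : ℕ∞) Z C) (hZhom : PosHomMap 2 C Z)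
    (hAsmooth : ContDiffOn ℝ (⊤ : ℕ∞) A C) (hAhom : PosHomMap 0 C A)
    (hdec : ∀ y ∈ C, ∀ i k, J y i k = pd (fun z => Z z k) i y + A y i * y k) :
    ∃ (V : Set (Fin n → ℝ)) (Zh Ah : (Fin n → ℝ) → Fin n → ℝ),
      IsOpen V ∧ Conic V ∧ (∀ y ∈ V, y ≠ 0) ∧ clos C ⊆ V ∧
      ContDiffOn ℝ (⊤ : ℕ∞) Zh V ∧ PosHomMap 2 V Zh ∧
      ContDiffOn ℝ (⊤ : ℕ∞) Ah V ∧ PosHomMap 0 V Ah ∧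
      (∀ y ∈ C, Zh y = Z y ∧ Ah y = A y) :=
  proper_solution_components_extend_general hn C hCopen hCnz U hUopen hUconic hUnz hCU J hJsmooth
    hJhom Z A hZsmooth hZhom hAsmooth hAhom hdec
end
end

section
/- Invariance of the Ricci scalar under torsion translations (Lemma 4.5, coordinate form): Let n ≥ 2 and let Ω ⊆ ℝ^n × (ℝ^n ∖ {0}) be open with conic fibers. Let N = (N_i^k) : Ω → ℝ be smooth and positively 1-homogeneous in y; set δ_i := ∂/∂x^i − N_i^a ∂/∂y^a and define the Ricci scalar Ric[N] := y^b ( δ_a N_b^a − δ_b N_a^a ). Then for every smooth A = (A_1,…,A_n) : Ω → ℝ^n, positively 0-homogeneous in y, the connection N* defined by (N*)_i^k := N_i^k + A_i y^k satisfies Ric[N*] = Ric[N] on Ω. -/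
/-!
With `N* = N + A ⊗ y` one has `δ*_i = δ_i - A_i y^c ∂/∂y^c`. Since `N*` is again
1-homogeneous, Euler's identity turns this into `δ*_i N*_b^a = δ_i N*_b^a - A_i N*_b^a`, and the
Leibniz rule gives `δ_i (A_b y^a) = (δ_i A_b) y^a - A_b N_i^a`. Contracting with `y^b`, all terms
containing `A` undifferentiated cancel in pairs, and what is left, `y^a y^b (δ_a A_b - δ_b A_a)`,
vanishes by antisymmetry.
-/

open scoped BigOperators

noncomputable section

/-- A point of `ℝ^n × ℝ^n` (base coordinates `x`, fiber coordinates `y`). -/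
abbrev Pt (n : ℕ) : Type := (Fin n → ℝ) × (Fin n → ℝ)

/-- Partial derivative `∂f/∂x^i` in the base variables. -/
def pdx {n : ℕ} (f : Pt n → ℝ) (i : Fin n) : Pt n → ℝ :=
  fun p => fderiv ℝ f p (Pi.single i 1, 0)

/-- Partial derivative `∂f/∂y^i` in the fiber variables. -/
def pdy {n : ℕ} (f : Pt n → ℝ) (i : Fin n) : Pt n → ℝ :=
  fun p => fderiv ℝ f p (0, Pi.single i 1)

/-- Fundamental tensor `g_ij(x,y) = (1/2) ∂²L/∂y^i∂y^j`. -/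
def gmet2 {n : ℕ} (L : Pt n → ℝ) (p : Pt n) : Matrix (Fin n) (Fin n) ℝ :=
  Matrix.of fun i j => (1 / 2) * pdy (pdy L i) j p

/-- Inverse fundamental tensor `g^{ij}`. -/
def ginv2 {n : ℕ} (L : Pt n → ℝ) (p : Pt n) : Matrix (Fin n) (Fin n) ℝ :=
  (gmet2 L p)⁻¹

/-- Metric spray `(G^L)^i = (1/4) g^{ia} (2 ∂g_{ab}/∂x^c − ∂g_{bc}/∂x^a) y^b y^c`. -/
def spray {n : ℕ} (L : Pt n → ℝ) (p : Pt n) (i : Fin n) : ℝ :=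
  (1 / 4) * ∑ a, ginv2 L p i a *
    ∑ b, ∑ c, (2 * pdx (fun q => gmet2 L q a b) c p - pdx (fun q => gmet2 L q b c) a p)
      * p.2 b * p.2 c

/-- Metric nonlinear connection `(N^L)_i^k = ∂(G^L)^k/∂y^i`. -/
def metricConn {n : ℕ} (L : Pt n → ℝ) (p : Pt n) (i k : Fin n) : ℝ :=
  pdy (fun q => spray L q k) i p

/-- Horizontal derivative `δ_i f = ∂f/∂x^i − N_i^a ∂f/∂y^a`. -/
def deltaH {n : ℕ} (N : Pt n → Fin n → Fin n → ℝ) (i : Fin n) (f : Pt n → ℝ) (p : Pt n) : ℝ :=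
  pdx f i p - ∑ a, N p i a * pdy f a p

/-- Ricci scalar `Ric[N] = y^b (δ_a N_b^a − δ_b N_a^a)` of a nonlinear connection. -/
def RicciScalar {n : ℕ} (N : Pt n → Fin n → Fin n → ℝ) (p : Pt n) : ℝ :=
  ∑ b, p.2 b *
    ((∑ a, deltaH N a (fun q => N q b a) p) - (∑ a, deltaH N b (fun q => N q a a) p))

/-- `γ` is an `N`-geodesic on the interval `I`:
`γ` is `C²` on `I`, `(γ, γ̇)` stays in `Ω`, and `γ̈^k + N^k_a(γ,γ̇) γ̇^a = 0` on `I`. -/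
def IsGeodesicOn {n : ℕ} (Ω : Set (Pt n)) (N : Pt n → Fin n → Fin n → ℝ)
    (γ : ℝ → Fin n → ℝ) (I : Set ℝ) : Prop :=
  ContDiffOn ℝ 2 γ I ∧ (∀ t ∈ I, (γ t, deriv γ t) ∈ Ω) ∧
    ∀ t ∈ I, ∀ k, deriv (fun s => deriv γ s k) t
      + ∑ a, N (γ t, deriv γ t) a k * deriv γ t a = 0

open Finset

def torsionTranslate {n : ℕ} (N : Pt n → Fin n → Fin n → ℝ) (A : Pt n → Fin n → ℝ) :
    Pt n → Fin n → Fin n → ℝ :=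
  fun q i k => N q i k + A q i * q.2 k

section
variable {n : ℕ}

theorem fderiv_snd_apply (a : Fin n) (p v : Pt n) :
    fderiv ℝ (fun q : Pt n => q.2 a) p v = v.2 a := by
  have hlin : (fun q : Pt n => q.2 a) =
      (ContinuousLinearMap.proj a).comp (ContinuousLinearMap.snd ℝ (Fin n → ℝ) (Fin n → ℝ)) :=
    rfl
  rw [hlin, ContinuousLinearMap.fderiv]
  rfl

theorem sum_snd_mul_pdy_of_homogeneous {f : Pt n → ℝ} {p : Pt n} (hf : DifferentiableAt ℝ f p)
    {α : ℝ} (hhom : ∀ t : ℝ, 0 < t → f (p.1, t • p.2) = t ^ α * f p) :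
    ∑ c, p.2 c * pdy f c p = α * f p := by
  have hray : HasDerivAt (fun t : ℝ => ((p.1, t • p.2) : Pt n)) (0, p.2) 1 := by
    simpa using ((hasDerivAt_id (1 : ℝ)).smul_const ((0, p.2) : Pt n)).const_add (p.1, 0)
  have hcomp : HasDerivAt (fun t : ℝ => f (p.1, t • p.2)) (fderiv ℝ f p (0, p.2)) 1 :=
    (by simpa using hf.hasFDerivAt : HasFDerivAt f (fderiv ℝ f p) (p.1, (1 : ℝ) • p.2))
      |>.comp_hasDerivAt 1 hray
  have hpow : HasDerivAt (fun t : ℝ => t ^ α * f p) (α * f p) 1 := by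
    simpa using (Real.hasDerivAt_rpow_const (x := 1) (p := α) (Or.inl one_ne_zero)).mul_const (f p)
  have hdir : ((0, p.2) : Pt n) = ∑ c, p.2 c • ((0, Pi.single c 1) : Pt n) := by
    ext j <;> simp [Prod.fst_sum, Prod.snd_sum, Pi.single_apply]
  rw [hpow.unique (hcomp.congr_of_eventuallyEq
    (Filter.eventually_of_mem (Ioi_mem_nhds one_pos) fun t ht => (hhom t ht).symm)), hdir,
    map_sum]
  simp only [map_smul, smul_eq_mul, pdy]

theorem deltaH_add {N : Pt n → Fin n → Fin n → ℝ} {i : Fin n} {f g : Pt n → ℝ} {p : Pt n}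
    (hf : DifferentiableAt ℝ f p) (hg : DifferentiableAt ℝ g p) :
    deltaH N i (fun q => f q + g q) p = deltaH N i f p + deltaH N i g p := by
  simp only [deltaH, pdx, pdy, fderiv_fun_add hf hg, add_apply, mul_add, sum_add_distrib]
  ring

theorem deltaH_mul {N : Pt n → Fin n → Fin n → ℝ} {i : Fin n} {f g : Pt n → ℝ} {p : Pt n}
    (hf : DifferentiableAt ℝ f p) (hg : DifferentiableAt ℝ g p) :
    deltaH N i (fun q => f q * g q) p = deltaH N i f p * g p + f p * deltaH N i g p := by
  simp only [deltaH, pdx, pdy, fderiv_fun_mul hf hg, add_apply, smul_apply, smul_eq_mul,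
    mul_add, sum_add_distrib, sub_mul, mul_sub, sum_mul, mul_sum]
  ring_nf

theorem deltaH_snd_apply (N : Pt n → Fin n → Fin n → ℝ) (i a : Fin n) (p : Pt n) :
    deltaH N i (fun q => q.2 a) p = -N p i a := by
  simp [deltaH, pdx, pdy, fderiv_snd_apply, Pi.single_apply]

theorem deltaH_torsionTranslate (N : Pt n → Fin n → Fin n → ℝ) (A : Pt n → Fin n → ℝ)
    (i : Fin n) (f : Pt n → ℝ) (p : Pt n) :
    deltaH (torsionTranslate N A) i f p = deltaH N i f p - A p i * ∑ c, p.2 c * pdy f c p := by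
  simp only [deltaH, torsionTranslate, add_mul, sum_add_distrib, mul_sum]
  ring_nf

theorem deltaH_torsionTranslate_component {N : Pt n → Fin n → Fin n → ℝ} {A : Pt n → Fin n → ℝ}
    {p : Pt n} (i : Fin n) {b a : Fin n} (hN : DifferentiableAt ℝ (fun q => N q b a) p)
    (hA : DifferentiableAt ℝ (fun q => A q b) p)
    (hNhom : ∀ t : ℝ, 0 < t → N (p.1, t • p.2) b a = t * N p b a)
    (hAhom : ∀ t : ℝ, 0 < t → A (p.1, t • p.2) b = A p b) :
    deltaH (torsionTranslate N A) i (fun q => torsionTranslate N A q b a) p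
      = deltaH N i (fun q => N q b a) p + deltaH N i (fun q => A q b) p * p.2 a
        - A p b * N p i a - A p i * torsionTranslate N A p b a := by
  have hy : DifferentiableAt ℝ (fun q : Pt n => q.2 a) p := by fun_prop
  have hAy : DifferentiableAt ℝ (fun q => A q b * q.2 a) p := hA.mul hy
  have hM : DifferentiableAt ℝ (fun q => torsionTranslate N A q b a) p := hN.add hAy
  have heuler : ∑ c, p.2 c * pdy (fun q => torsionTranslate N A q b a) c p
      = torsionTranslate N A p b a := by
    simpa using sum_snd_mul_pdy_of_homogeneous (α := 1) hM fun t ht => by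
      simp only [torsionTranslate, hNhom t ht, hAhom t ht, Pi.smul_apply, smul_eq_mul,
        Real.rpow_one]
      ring
  rw [deltaH_torsionTranslate, heuler]
  simp only [torsionTranslate]
  rw [deltaH_add hN hAy, deltaH_mul hA hy, deltaH_snd_apply]
  ring

end

theorem sum_sum_mul_mul_sub_swap {ι R : Type*} [Fintype ι] [CommRing R] (y : ι → R)
    (D : ι → ι → R) : ∑ b, ∑ a, y b * y a * (D a b - D b a) = 0 := by
  simp only [mul_sub, sum_sub_distrib]
  rw [sub_eq_zero, sum_comm]
  exact sum_congr rfl fun _ _ => sum_congr rfl fun _ _ => by ring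

theorem ricci_invariant_under_torsion_translation_general
    {n : ℕ} (Ω : Set (Pt n)) (hΩopen : IsOpen Ω)
    (N : Pt n → Fin n → Fin n → ℝ)
    (hNsmooth : ContDiffOn ℝ (⊤ : ℕ∞) N Ω)
    (hNhom : ∀ p ∈ Ω, ∀ t : ℝ, 0 < t → N (p.1, t • p.2) = t • N p)
    (A : Pt n → Fin n → ℝ)
    (hAsmooth : ContDiffOn ℝ (⊤ : ℕ∞) A Ω)
    (hAhom : ∀ p ∈ Ω, ∀ t : ℝ, 0 < t → A (p.1, t • p.2) = A p) :
    ∀ p ∈ Ω,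
      RicciScalar (fun q i k => N q i k + A q i * q.2 k) p = RicciScalar N p := by
  intro p hp
  have hmem := hΩopen.mem_nhds hp
  have hN : ∀ b a, DifferentiableAt ℝ (fun q => N q b a) p := fun b a =>
    differentiableAt_pi.mp (differentiableAt_pi.mp
      ((hNsmooth.contDiffAt hmem).differentiableAt (by simp)) b) a
  have hA : ∀ b, DifferentiableAt ℝ (fun q => A q b) p := fun b =>
    differentiableAt_pi.mp ((hAsmooth.contDiffAt hmem).differentiableAt (by simp)) b
  have hδ : ∀ i b a, deltaH (torsionTranslate N A) i (fun q => torsionTranslate N A q b a) p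
      = deltaH N i (fun q => N q b a) p + deltaH N i (fun q => A q b) p * p.2 a
        - A p b * N p i a - A p i * torsionTranslate N A p b a := fun i b a =>
    deltaH_torsionTranslate_component i (hN b a) (hA b)
      (fun t ht => congrFun (congrFun (hNhom p hp t ht) b) a)
      (fun t ht => congrFun (hAhom p hp t ht) b)
  show RicciScalar (torsionTranslate N A) p = RicciScalar N p
  rw [← sub_eq_zero, ← sum_sum_mul_mul_sub_swap p.2 fun a b => deltaH N a (fun q => A q b) p]
  simp only [RicciScalar, hδ, ← sum_sub_distrib]
  refine sum_congr rfl fun b _ => ?_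
  rw [← mul_sub, ← sum_sub_distrib, mul_sum]
  exact sum_congr rfl fun a _ => by simp only [torsionTranslate]; ring

/-- **Invariance of the Ricci scalar under torsion translations** (Lemma 4.5, coordinate
form). For a smooth homogeneous nonlinear connection `N` on `Ω` and any smooth
0-homogeneous `A`, the connection `(N*)_i^k := N_i^k + A_i y^k` has the same Ricci
scalar as `N` on `Ω`. -/
theorem ricci_invariant_under_torsion_translation
    {n : ℕ} (hn : 2 ≤ n) (Ω : Set (Pt n)) (hΩopen : IsOpen Ω)
    (hΩconic : ∀ p ∈ Ω, ∀ t : ℝ, 0 < t → (p.1, t • p.2) ∈ Ω)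
    (hΩnz : ∀ p ∈ Ω, p.2 ≠ 0)
    (N : Pt n → Fin n → Fin n → ℝ)
    (hNsmooth : ContDiffOn ℝ (⊤ : ℕ∞) N Ω)
    (hNhom : ∀ p ∈ Ω, ∀ t : ℝ, 0 < t → N (p.1, t • p.2) = t • N p)
    (A : Pt n → Fin n → ℝ)
    (hAsmooth : ContDiffOn ℝ (⊤ : ℕ∞) A Ω)
    (hAhom : ∀ p ∈ Ω, ∀ t : ℝ, 0 < t → A (p.1, t • p.2) = A p) :
    ∀ p ∈ Ω,
      RicciScalar (fun q i k => N q i k + A q i * q.2 k) p = RicciScalar N p :=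
  ricci_invariant_under_torsion_translation_general Ω hΩopen N hNsmooth hNhom A hAsmooth hAhom
end
end
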